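/- Let S be a λ-sparse collection of dyadic cubes, σ a locally integrable nonnegative weight on ℝ^d, and Q₀ ∈ S. Then ∑_{Q ∈ S, Q ⊆ Q₀} σ(Q) ≤ C(λ) · ρ(Q₀;σ) · σ(Q₀), where ρ(Q₀;σ) = (1/σ(Q₀)) ∫_{Q₀} M(σ·1_{Q₀}) and M is the Hardy–Littlewood maximal operator. -/

import Mathlib

open MeasureTheory Set
open scoped ENNReal NNReal

noncomputable section

/-- An axis-parallel cube in `ℝ^d`, given by its lower-left corner and (positive) side length. -/
structure Cube (d : ℕ) where
  corner : Fin d → ℝ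
  side : ℝ
  side_pos : 0 < side

namespace Cube

/-- The underlying set of a cube (half-open). -/
def toSet {d : ℕ} (Q : Cube d) : Set (Fin d → ℝ) :=
  Set.univ.pi fun i => Set.Ico (Q.corner i) (Q.corner i + Q.side)

/-- The Lebesgue measure `|Q|` of a cube. -/
def vol {d : ℕ} (Q : Cube d) : ℝ≥0∞ := volume Q.toSet

/-- A cube is dyadic if it has the form `2^{-k}([0,1)^d + n)`, `n ∈ ℤ^d`. -/
def IsDyadic {d : ℕ} (Q : Cube d) : Prop :=
  ∃ k : ℤ, Q.side = 2 ^ (-k) ∧ ∀ i, ∃ n : ℤ, Q.corner i = (n : ℝ) * 2 ^ (-k)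

end Cube

/-- The `σ`-measure `σ(Q) = ∫_Q σ` of a cube. -/
def wt {d : ℕ} (σ : (Fin d → ℝ) → ℝ≥0∞) (Q : Cube d) : ℝ≥0∞ :=
  ∫⁻ x in Q.toSet, σ x

/-- The average `⟨σ⟩_Q = σ(Q)/|Q|` of `σ` over a cube. -/
def avg {d : ℕ} (σ : (Fin d → ℝ) → ℝ≥0∞) (Q : Cube d) : ℝ≥0∞ :=
  wt σ Q / Q.vol

/-- The uncentered Hardy–Littlewood maximal function over cubes. -/
def maximal {d : ℕ} (σ : (Fin d → ℝ) → ℝ≥0∞) (x : Fin d → ℝ) : ℝ≥0∞ :=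
  ⨆ (Q : Cube d) (_ : x ∈ Q.toSet), avg σ Q

/-- The local `A_∞` characteristic `ρ(Q;σ) = σ(Q)⁻¹ ∫_Q M(σ 1_Q)`. -/
def rho {d : ℕ} (σ : (Fin d → ℝ) → ℝ≥0∞) (Q : Cube d) : ℝ≥0∞ :=
  (∫⁻ x in Q.toSet, maximal (Q.toSet.indicator σ) x) / wt σ Q

/-- The sparse set `E_Q = Q \ ⋃ {Q' ∈ S : Q' ⊊ Q}` associated to a cube of a family `S`. -/
def sparseSet {d : ℕ} (S : Set (Cube d)) (Q : Cube d) : Set (Fin d → ℝ) :=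
  Q.toSet \ ⋃ Q' ∈ {Q' ∈ S | Q'.toSet ⊂ Q.toSet}, Q'.toSet

/-- `S` is `λ`-sparse: the sets `E_Q` are pairwise disjoint and `|E_Q| ≥ (1-λ)|Q|`. -/
def IsSparse {d : ℕ} (lam : ℝ≥0∞) (S : Set (Cube d)) : Prop :=
  S.PairwiseDisjoint (sparseSet S) ∧ ∀ Q ∈ S, (1 - lam) * Q.vol ≤ volume (sparseSet S Q)

/- ## Auxiliary lemmas -/

lemma cube_ext {d : ℕ} {Q Q' : Cube d} (hc : Q.corner = Q'.corner) (hs : Q.side = Q'.side) :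
    Q = Q' := by
  cases Q; cases Q'; simp_all

lemma cube_toSet_measurable {d : ℕ} (Q : Cube d) : MeasurableSet Q.toSet :=
  MeasurableSet.univ_pi fun _ => measurableSet_Ico

lemma cube_vol_eq {d : ℕ} (Q : Cube d) : Q.vol = ENNReal.ofReal Q.side ^ d := by
  rw [Cube.vol, Cube.toSet, volume_pi_pi]
  simp [Real.volume_Ico]

lemma cube_vol_ne_zero {d : ℕ} (Q : Cube d) : Q.vol ≠ 0 := by
  rw [cube_vol_eq]
  exact pow_ne_zero _ (by simp [ENNReal.ofReal_pos, Q.side_pos, (Q.side_pos).ne'])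

lemma cube_vol_ne_top {d : ℕ} (Q : Cube d) : Q.vol ≠ ∞ := by
  rw [cube_vol_eq]
  exact ENNReal.pow_ne_top ENNReal.ofReal_ne_top

lemma dyadic_countable {d : ℕ} : {Q : Cube d | Q.IsDyadic}.Countable := by
  have h : {Q : Cube d | Q.IsDyadic} ⊆ Set.range
      (fun p : ℤ × (Fin d → ℤ) => (⟨fun i => (p.2 i : ℝ) * 2 ^ (-p.1), 2 ^ (-p.1),
        by positivity⟩ : Cube d)) := by
    rintro Q ⟨k, hside, hcorner⟩
    choose n hn using hcorner
    exact ⟨(k, n), (cube_ext (by ext i; exact hn i) hside).symm⟩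
  exact (Set.countable_range _).mono h

/-- For a `λ`-sparse family of dyadic cubes and a locally integrable weight `σ`,
`∑_{Q ∈ S, Q ⊆ Q₀} σ(Q) ≤ C(λ) ρ(Q₀;σ) σ(Q₀)`. -/
theorem statement1 (lam : ℝ≥0∞) (hlam0 : 0 < lam) (hlam1 : lam < 1) :
    ∃ C : ℝ≥0∞, C ≠ ∞ ∧
      ∀ (d : ℕ) (S : Set (Cube d)), (∀ Q ∈ S, Q.IsDyadic) → IsSparse lam S →
        ∀ (σ : (Fin d → ℝ) → ℝ≥0∞), Measurable σ → (∀ Q : Cube d, wt σ Q ≠ ∞) →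
          ∀ Q₀ ∈ S,
            (∑' Q : {Q : Cube d // Q ∈ S ∧ Q.toSet ⊆ Q₀.toSet}, wt σ (Q : Cube d))
              ≤ C * rho σ Q₀ * wt σ Q₀ := by
  have hne0 : (1 : ℝ≥0∞) - lam ≠ 0 := (tsub_pos_of_lt hlam1).ne'
  have hnetop : (1 : ℝ≥0∞) - lam ≠ ∞ := ne_top_of_le_ne_top ENNReal.one_ne_top tsub_le_self
  refine ⟨(1 - lam)⁻¹, by simp [ENNReal.inv_ne_top, hne0], ?_⟩
  intro d S hdy hsp σ hσ hfin Q₀ hQ₀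
  have hScount : S.Countable := dyadic_countable.mono (fun Q hQ => hdy Q hQ)
  haveI : Countable {Q : Cube d // Q ∈ S ∧ Q.toSet ⊆ Q₀.toSet} :=
    (hScount.mono (fun Q hQ => hQ.1)).to_subtype
  set σ' := Q₀.toSet.indicator σ with hσ'def
  by_cases hw : wt σ Q₀ = 0
  · have hz : ∀ Q : {Q : Cube d // Q ∈ S ∧ Q.toSet ⊆ Q₀.toSet}, wt σ (Q : Cube d) = 0 := by
      rintro ⟨Q, hQS, hQsub⟩
      refine le_antisymm ?_ zero_le
      rw [← hw]
      exact lintegral_mono' (Measure.restrict_mono hQsub le_rfl) le_rfl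
    simp [hz]
  -- measurability of the sparse sets
  have hEmeas : ∀ Q : Cube d, MeasurableSet (sparseSet S Q) := by
    intro Q
    exact (cube_toSet_measurable Q).diff
      (MeasurableSet.biUnion (hScount.mono (Set.sep_subset _ _))
        fun Q' _ => cube_toSet_measurable Q')
  -- the key estimate for each cube
  have key : ∀ Q : {Q : Cube d // Q ∈ S ∧ Q.toSet ⊆ Q₀.toSet},
      wt σ (Q : Cube d) ≤ (1 - lam)⁻¹ * ∫⁻ x in sparseSet S (Q : Cube d), maximal σ' x := by
    rintro ⟨Q, hQS, hQsub⟩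
    have hwt' : wt σ' Q = wt σ Q := by
      unfold wt
      refine setLIntegral_congr_fun (cube_toSet_measurable Q) (fun x hx => ?_)
      exact Set.indicator_of_mem (hQsub hx) σ
    have h1 : avg σ' Q * volume (sparseSet S Q) ≤ ∫⁻ x in sparseSet S Q, maximal σ' x := by
      rw [← setLIntegral_const]
      exact setLIntegral_mono' (hEmeas Q) fun x hx =>
        le_iSup₂ (f := fun (R : Cube d) (_ : x ∈ R.toSet) => avg σ' R) Q hx.1
    have hvol : Q.vol ≤ (1 - lam)⁻¹ * volume (sparseSet S Q) := by
      calc Q.vol = (1 - lam)⁻¹ * ((1 - lam) * Q.vol) := by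
            rw [← mul_assoc, ENNReal.inv_mul_cancel hne0 hnetop, one_mul]
        _ ≤ (1 - lam)⁻¹ * volume (sparseSet S Q) := mul_le_mul_right (hsp.2 Q hQS) _
    calc wt σ Q = avg σ' Q * Q.vol := by
          rw [avg, hwt', ENNReal.div_mul_cancel (cube_vol_ne_zero Q) (cube_vol_ne_top Q)]
      _ ≤ avg σ' Q * ((1 - lam)⁻¹ * volume (sparseSet S Q)) := mul_le_mul_right hvol _
      _ = (1 - lam)⁻¹ * (avg σ' Q * volume (sparseSet S Q)) := by ring
      _ ≤ (1 - lam)⁻¹ * ∫⁻ x in sparseSet S Q, maximal σ' x := mul_le_mul_right h1 _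
  -- disjointness
  have hdisj : Pairwise (Function.onFun Disjoint
      fun Q : {Q : Cube d // Q ∈ S ∧ Q.toSet ⊆ Q₀.toSet} => sparseSet S (Q : Cube d)) := by
    intro i j hij
    exact hsp.1 i.2.1 j.2.1 (fun h => hij (Subtype.ext h))
  have hU : (⋃ Q : {Q : Cube d // Q ∈ S ∧ Q.toSet ⊆ Q₀.toSet}, sparseSet S (Q : Cube d))
      ⊆ Q₀.toSet := Set.iUnion_subset fun Q => Set.diff_subset.trans Q.2.2
  calc (∑' Q : {Q : Cube d // Q ∈ S ∧ Q.toSet ⊆ Q₀.toSet}, wt σ (Q : Cube d))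
      ≤ ∑' Q : {Q : Cube d // Q ∈ S ∧ Q.toSet ⊆ Q₀.toSet},
          (1 - lam)⁻¹ * ∫⁻ x in sparseSet S (Q : Cube d), maximal σ' x :=
        ENNReal.tsum_le_tsum key
    _ = (1 - lam)⁻¹ * ∑' Q : {Q : Cube d // Q ∈ S ∧ Q.toSet ⊆ Q₀.toSet},
          ∫⁻ x in sparseSet S (Q : Cube d), maximal σ' x := ENNReal.tsum_mul_left
    _ = (1 - lam)⁻¹ * ∫⁻ x in ⋃ Q : {Q : Cube d // Q ∈ S ∧ Q.toSet ⊆ Q₀.toSet},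
          sparseSet S (Q : Cube d), maximal σ' x := by
        rw [lintegral_iUnion (fun Q => hEmeas _) hdisj]
    _ ≤ (1 - lam)⁻¹ * ∫⁻ x in Q₀.toSet, maximal σ' x :=
        mul_le_mul_right (lintegral_mono' (Measure.restrict_mono hU le_rfl) le_rfl) _
    _ = (1 - lam)⁻¹ * rho σ Q₀ * wt σ Q₀ := by
        rw [rho, mul_assoc, ENNReal.div_mul_cancel hw (hfin Q₀)]
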